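/- arXiv:1411.4255 — 7 statements merged into one kernel-verified Lean document; each statement's English description precedes it below -/
import Mathlib

section
/- Let (a_i)_{i≥1} be strictly positive reals with partial sums A_i. If for every ε > 0 there exists N such that a_i ≤ i^{-α+ε} for all i ≥ N (where α > 0), then for every ε > 0 there exists M such that ∑_{i≥n} a_i²/A_i ≤ n^{-α+ε} for all n ≥ M. -/
/-!
Write `a k ^ 2 / A k = (a k * A k ^ δ) * (a k / A k ^ (1 + δ))` for a small `δ > 0`. The second
factor is at most `(A (k - 1) ^ (-δ) - A k ^ (-δ)) / δ` by convexity of `t ↦ t ^ (-δ)`, so its tail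
sum is bounded by `a 0 ^ (-δ) / δ` independently of the starting index. The hypothesis makes the
`a k` eventually bounded, hence `A k = O(k)`, and so the first factor is `O(n ^ (-α + 2δ))` uniformly
for `k ≥ n`. Taking `δ` small against `ε` and `α` absorbs the constants.
-/

open Real Filter Finset

lemma sub_div_rpow_one_add_le {δ x y : ℝ} (hδ : 0 < δ) (hy : 0 < y) (hyx : y ≤ x) :
    (x - y) / x ^ (1 + δ) ≤ (y ^ (-δ) - x ^ (-δ)) / δ := by
  have hx : 0 < x := hy.trans_le hyx
  have bernoulli : 1 + (1 + δ) * (x / y - 1) ≤ (x / y) ^ (1 + δ) := by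
    simpa using one_add_mul_self_le_rpow_one_add
      (show -1 ≤ x / y - 1 by linarith [div_nonneg hx.le hy.le]) (by linarith : 1 ≤ 1 + δ)
  have hxy : (x / y) ^ (1 + δ) = x ^ (1 + δ) * y ^ (-δ) / y := by
    rw [div_rpow hx.le hy.le, rpow_add hy, rpow_one, rpow_neg hy.le]
    field_simp
  have hxx : x ^ (1 + δ) * x ^ (-δ) = x := by
    rw [← rpow_add hx]; simp
  rw [hxy, le_div_iff₀ hy] at bernoulli
  rw [div_le_div_iff₀ (by positivity) hδ]
  have : (1 + (1 + δ) * (x / y - 1)) * y = x + δ * (x - y) := by field_simp; ring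
  nlinarith

lemma sum_range_sub_div_rpow_one_add_le {A : ℕ → ℝ} (hA : Monotone A) (hpos : ∀ k, 0 < A k)
    {δ : ℝ} (hδ : 0 < δ) (m : ℕ) :
    ∑ i ∈ range m, (A (i + 1) - A i) / A (i + 1) ^ (1 + δ) ≤ A 0 ^ (-δ) / δ :=
  calc ∑ i ∈ range m, (A (i + 1) - A i) / A (i + 1) ^ (1 + δ)
      ≤ ∑ i ∈ range m, (A i ^ (-δ) - A (i + 1) ^ (-δ)) / δ :=
        sum_le_sum fun i _ ↦ sub_div_rpow_one_add_le hδ (hpos i) (hA i.le_succ)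
    _ = (A 0 ^ (-δ) - A m ^ (-δ)) / δ := by rw [← sum_div, sum_range_sub']
    _ ≤ A 0 ^ (-δ) / δ := by
        gcongr
        exact sub_le_self _ (rpow_nonneg (hpos m).le _)

lemma exists_sum_range_succ_le_mul {a : ℕ → ℝ} {N : ℕ} {c : ℝ} (h : ∀ i ≥ N, a i ≤ c) :
    ∃ K, ∀ k, ∑ i ∈ range (k + 1), a i ≤ K * (k + 1) := by
  obtain ⟨K, hK⟩ : BddAbove (Set.range a) :=
    IsBoundedUnder.bddAbove_range ⟨c, eventually_map.2 (eventually_atTop.2 ⟨N, h⟩)⟩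
  refine ⟨K, fun k ↦ ?_⟩
  simpa [mul_comm] using sum_le_card_nsmul (range (k + 1)) a K fun i _ ↦ hK ⟨i, rfl⟩

lemma mul_rpow_le_of_le_rpow {x y K β δ : ℝ} {n k : ℕ} (hn : 1 ≤ n) (hnk : n ≤ k)
    (hxk : x ≤ (k : ℝ) ^ β) (hy : 0 ≤ y) (hyk : y ≤ K * (k + 1))
    (hδ : 0 ≤ δ) (hβδ : β + δ ≤ 0) :
    x * y ^ δ ≤ (2 * K) ^ δ * (n : ℝ) ^ (β + δ) := by
  have hn' : (1 : ℝ) ≤ n := by exact_mod_cast hn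
  have hnk' : (n : ℝ) ≤ k := by exact_mod_cast hnk
  have hk : (0 : ℝ) < k := by linarith
  have hK : 0 ≤ K := nonneg_of_mul_nonneg_left (hy.trans hyk) (by positivity)
  calc x * y ^ δ ≤ (k : ℝ) ^ β * (2 * K * k) ^ δ := by
        gcongr
        nlinarith
    _ = (2 * K) ^ δ * (k : ℝ) ^ (β + δ) := by
        rw [mul_rpow (by positivity) hk.le, rpow_add hk]; ring
    _ ≤ (2 * K) ^ δ * (n : ℝ) ^ (β + δ) :=
        mul_le_mul_of_nonneg_left (rpow_le_rpow_of_nonpos (by linarith) hnk' hβδ) (by positivity)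

lemma tsum_sq_div_partialSum_le {a A : ℕ → ℝ} (ha : ∀ i, 0 < a i)
    (hA : ∀ n, A n = ∑ i ∈ range (n + 1), a i) {δ B : ℝ} (hδ : 0 < δ) (p : ℕ)
    (hB : ∀ k ≥ p + 1, a k * A k ^ δ ≤ B) :
    ∑' i, a (i + (p + 1)) ^ 2 / A (i + (p + 1)) ≤ B * (a 0 ^ (-δ) / δ) := by
  have hpos : ∀ k, 0 < A k := fun k ↦ hA k ▸ sum_pos (fun i _ ↦ ha i) nonempty_range_add_one
  have hsucc : ∀ k, A (k + 1) - A k = a (k + 1) := fun k ↦ by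
    rw [hA, hA, sum_range_succ]; ring
  have hmono : Monotone A := monotone_nat_of_le_succ fun k ↦ by linarith [hsucc k, ha (k + 1)]
  have hB0 : 0 ≤ B := (mul_pos (ha _) (rpow_pos_of_pos (hpos _) _)).le.trans (hB _ le_rfl)
  have hterm : ∀ k ≥ p + 1, a k ^ 2 / A k ≤ B * (a k / A k ^ (1 + δ)) := fun k hk ↦ by
    have hsplit : a k ^ 2 / A k = a k * A k ^ δ * (a k / A k ^ (1 + δ)) := by
      have := rpow_pos_of_pos (hpos k) δ
      rw [rpow_add (hpos k), rpow_one]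
      field_simp
    rw [hsplit]
    exact mul_le_mul_of_nonneg_right (hB k hk)
      (div_nonneg (ha k).le (rpow_pos_of_pos (hpos k) _).le)
  refine tsum_le_of_sum_range_le (fun i ↦ div_nonneg (sq_nonneg _) (hpos _).le) fun m ↦ ?_
  have htel := sum_range_sub_div_rpow_one_add_le (fun _ _ h ↦ hmono (Nat.add_le_add_right h p))
    (fun k ↦ hpos (k + p)) hδ m
  simp only [zero_add, add_right_comm _ 1 p, hsucc] at htel
  calc ∑ i ∈ range m, a (i + (p + 1)) ^ 2 / A (i + (p + 1))
      ≤ B * ∑ i ∈ range m, a (i + (p + 1)) / A (i + (p + 1)) ^ (1 + δ) := by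
        rw [mul_sum]; exact sum_le_sum fun i _ ↦ hterm _ (by omega)
    _ ≤ B * (A p ^ (-δ) / δ) := by
        gcongr
        simpa only [add_assoc] using htel
    _ ≤ B * (a 0 ^ (-δ) / δ) := by
        have ha0 : a 0 ≤ A p := by simpa [hA 0] using hmono (Nat.zero_le p)
        exact mul_le_mul_of_nonneg_left (div_le_div_of_nonneg_right
          (rpow_le_rpow_of_nonpos (ha 0) ha0 (neg_nonpos.2 hδ.le)) hδ.le) hB0

lemma eventually_const_mul_rpow_le_rpow (c : ℝ) {β γ : ℝ} (hβγ : β < γ) :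
    ∀ᶠ n : ℕ in atTop, c * (n : ℝ) ^ β ≤ (n : ℝ) ^ γ := by
  have hgrow : Tendsto (fun n : ℕ ↦ (n : ℝ) ^ (γ - β)) atTop atTop :=
    (tendsto_rpow_atTop (by linarith)).comp tendsto_natCast_atTop_atTop
  filter_upwards [hgrow.eventually_ge_atTop c, eventually_gt_atTop 0] with n hc hn
  have hn' : (0 : ℝ) < n := by exact_mod_cast hn
  calc c * (n : ℝ) ^ β ≤ (n : ℝ) ^ (γ - β) * (n : ℝ) ^ β := by gcongr
    _ = (n : ℝ) ^ γ := by rw [← rpow_add hn']; ring_nf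

/-- If `a i ≤ i^(-α + o(1))` for some `α > 0`, then the tail sums satisfy
`∑_{i ≥ n} a i ^ 2 / A i ≤ n^(-α + o(1))`. -/
theorem stmt_2 (a : ℕ → ℝ) (ha : ∀ i, 0 < a i)
    (A : ℕ → ℝ) (hA : ∀ n, A n = ∑ i ∈ Finset.range (n + 1), a i)
    (α : ℝ) (hα : 0 < α)
    (hupper : ∀ ε > (0 : ℝ), ∃ N : ℕ, ∀ i ≥ N, a i ≤ (i : ℝ) ^ (-α + ε)) :
    ∀ ε > (0 : ℝ), ∃ M : ℕ, ∀ n ≥ M,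
      (∑' i : ℕ, (a (i + n)) ^ 2 / A (i + n)) ≤ (n : ℝ) ^ (-α + ε) := by
  intro ε hε
  obtain ⟨η, hη, hηε, hηα⟩ : ∃ η : ℝ, 0 < η ∧ 3 * η ≤ ε ∧ 3 * η ≤ α :=
    ⟨min ε α / 3, by positivity, by linarith [min_le_left ε α], by linarith [min_le_right ε α]⟩
  obtain ⟨N, hN⟩ := hupper η hη
  obtain ⟨N₁, hN₁⟩ := hupper α hα
  obtain ⟨K, hK⟩ := exists_sum_range_succ_le_mul (c := 1) fun i hi ↦ by simpa using hN₁ i hi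
  obtain ⟨M, hM⟩ := eventually_atTop.1 <| eventually_const_mul_rpow_le_rpow
    ((2 * K) ^ η * (a 0 ^ (-η) / η)) (show -α + η + η < -α + ε by linarith)
  refine ⟨max M (N + 1), fun n hn ↦ ?_⟩
  obtain ⟨p, rfl⟩ : ∃ p, n = p + 1 := ⟨n - 1, by omega⟩
  calc ∑' i, a (i + (p + 1)) ^ 2 / A (i + (p + 1))
      ≤ (2 * K) ^ η * ((p + 1 : ℕ) : ℝ) ^ (-α + η + η) * (a 0 ^ (-η) / η) :=
        tsum_sq_div_partialSum_le ha hA hη p fun k hk ↦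
          mul_rpow_le_of_le_rpow le_add_self hk (hN k (by omega))
            (hA k ▸ sum_nonneg fun i _ ↦ (ha i).le) (hA k ▸ hK k) hη.le (by linarith)
    _ ≤ ((p + 1 : ℕ) : ℝ) ^ (-α + ε) := by
        rw [mul_right_comm]; exact hM _ (le_of_max_le_left hn)
end

section
/- Let (a_i)_{i≥1} be strictly positive reals with partial sums A_i and α ∈ (0,1). If for every ε > 0 eventually A_i ≥ i^{1-α-ε}, then for every ε > 0 eventually ∑_{i≥n} a_i / A_i² ≤ n^{α-1+ε}. -/
/-!
Since `a i = A i - A (i - 1)` and `A` is increasing, `a i / A i ^ 2 ≤ 1 / A (i - 1) - 1 / A i`,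
so the tail from `n` telescopes to at most `1 / A (n - 1)`. The growth hypothesis for `ε / 2`
gives `A (n - 1) ≥ (n - 1) ^ (1 - α - ε / 2) ≥ n ^ (1 - α - ε)` for large `n`: the spare factor
`n ^ (ε / 2)` absorbs the shift from `n - 1` to `n`.
-/

open Filter

lemma sub_div_sq_le_inv_sub_inv {x y : ℝ} (hx : 0 < x) (hxy : x ≤ y) :
    (y - x) / y ^ 2 ≤ x⁻¹ - y⁻¹ := by
  have hy : 0 < y := hx.trans_le hxy
  calc (y - x) / y ^ 2 ≤ (y - x) / (x * y) := by
        rw [sq]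
        gcongr
    _ = x⁻¹ - y⁻¹ := by field_simp

lemma tsum_sub_div_sq_le_inv {A : ℕ → ℝ} (hpos : ∀ n, 0 < A n) (hmono : Monotone A) :
    ∑' i, (A (i + 1) - A i) / A (i + 1) ^ 2 ≤ (A 0)⁻¹ := by
  refine Real.tsum_le_of_sum_range_le
    (fun i => div_nonneg (sub_nonneg.2 (hmono i.le_succ)) (sq_nonneg _)) fun n => ?_
  calc ∑ i ∈ Finset.range n, (A (i + 1) - A i) / A (i + 1) ^ 2
      ≤ ∑ i ∈ Finset.range n, ((A i)⁻¹ - (A (i + 1))⁻¹) :=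
        Finset.sum_le_sum fun i _ => sub_div_sq_le_inv_sub_inv (hpos i) (hmono i.le_succ)
    _ = (A 0)⁻¹ - (A n)⁻¹ := Finset.sum_range_sub' _ n
    _ ≤ (A 0)⁻¹ := sub_le_self _ (inv_nonneg.2 (hpos n).le)

lemma tsum_div_partialSum_sq_le {a A : ℕ → ℝ} (ha : ∀ i, 0 < a i)
    (hA : ∀ n, A n = ∑ i ∈ Finset.range (n + 1), a i) (m : ℕ) :
    ∑' i, a (i + (m + 1)) / A (i + (m + 1)) ^ 2 ≤ (A m)⁻¹ := by
  have hpos : ∀ n, 0 < A n := fun n =>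
    hA n ▸ Finset.sum_pos (fun i _ => ha i) Finset.nonempty_range_add_one
  have hstep : ∀ n, A (n + 1) - A n = a (n + 1) := fun n => by
    rw [hA, hA, Finset.sum_range_succ, add_sub_cancel_left]
  have hmono : Monotone A := monotone_nat_of_le_succ fun n => by linarith [hstep n, ha (n + 1)]
  have h := tsum_sub_div_sq_le_inv (A := fun i => A (i + m)) (fun i => hpos (i + m))
    (hmono.comp (monotone_id.add_const m))
  simpa only [add_right_comm _ 1 m, hstep, zero_add, ← add_assoc] using h

lemma eventually_add_one_rpow_le_rpow_add (γ : ℝ) {ε : ℝ} (hε : 0 < ε) :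
    ∀ᶠ m : ℕ in atTop, ((m : ℝ) + 1) ^ γ ≤ (m : ℝ) ^ (γ + ε) := by
  have hratio : Tendsto (fun m : ℕ => ((m : ℝ) / (m + 1)) ^ γ * (m : ℝ) ^ ε) atTop atTop := by
    refine Tendsto.pos_mul_atTop one_pos ?_
      ((tendsto_rpow_atTop hε).comp tendsto_natCast_atTop_atTop)
    simpa using (tendsto_natCast_div_add_atTop (1 : ℝ)).rpow_const (Or.inl one_ne_zero)
  filter_upwards [hratio.eventually_ge_atTop 1, eventually_ge_atTop 1] with m hm hm1
  have hm0 : (0 : ℝ) < m := by exact_mod_cast hm1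
  rwa [Real.div_rpow hm0.le (by positivity), div_mul_eq_mul_div, ← Real.rpow_add hm0,
    one_le_div (by positivity)] at hm

theorem stmt_3_general (a : ℕ → ℝ) (ha : ∀ i, 0 < a i)
    (A : ℕ → ℝ) (hA : ∀ n, A n = ∑ i ∈ Finset.range (n + 1), a i)
    (α : ℝ)
    (hlower : ∀ ε > (0 : ℝ), ∃ N : ℕ, ∀ i ≥ N, (i : ℝ) ^ (1 - α - ε) ≤ A i) :
    ∀ ε > (0 : ℝ), ∃ M : ℕ, ∀ n ≥ M,
      (∑' i : ℕ, a (i + n) / (A (i + n)) ^ 2) ≤ (n : ℝ) ^ (α - 1 + ε) := by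
  intro ε hε
  obtain ⟨N, hN⟩ := hlower (ε / 2) (half_pos hε)
  have hgrowth : ∀ᶠ m : ℕ in atTop, ((m : ℝ) + 1) ^ (1 - α - ε) ≤ A m := by
    filter_upwards [eventually_add_one_rpow_le_rpow_add (1 - α - ε) (half_pos hε),
      eventually_ge_atTop N] with m hm hmN
    calc ((m : ℝ) + 1) ^ (1 - α - ε) ≤ (m : ℝ) ^ (1 - α - ε + ε / 2) := hm
      _ = (m : ℝ) ^ (1 - α - ε / 2) := by ring_nf
      _ ≤ A m := hN m hmN
  obtain ⟨M, hM⟩ := eventually_atTop.1 hgrowth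
  refine ⟨M + 1, fun n hn => ?_⟩
  obtain ⟨m, rfl⟩ : ∃ m, n = m + 1 := ⟨n - 1, by omega⟩
  calc ∑' i, a (i + (m + 1)) / A (i + (m + 1)) ^ 2 ≤ (A m)⁻¹ :=
      tsum_div_partialSum_sq_le ha hA m
    _ ≤ (((m : ℝ) + 1) ^ (1 - α - ε))⁻¹ := inv_anti₀ (by positivity) (hM m (by omega))
    _ = ((m + 1 : ℕ) : ℝ) ^ (α - 1 + ε) := by
      rw [← Real.rpow_neg (by positivity)]; push_cast; ring_nf

/-- If `A i ≥ i^(1 - α + o(1))` with `α ∈ (0,1)`, then the tail sums satisfy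
`∑_{i ≥ n} a i / (A i)^2 ≤ n^(α - 1 + o(1))`. -/
theorem stmt_3 (a : ℕ → ℝ) (ha : ∀ i, 0 < a i)
    (A : ℕ → ℝ) (hA : ∀ n, A n = ∑ i ∈ Finset.range (n + 1), a i)
    (α : ℝ) (hα : 0 < α) (hα1 : α < 1)
    (hlower : ∀ ε > (0 : ℝ), ∃ N : ℕ, ∀ i ≥ N, (i : ℝ) ^ (1 - α - ε) ≤ A i) :
    ∀ ε > (0 : ℝ), ∃ M : ℕ, ∀ n ≥ M,
      (∑' i : ℕ, a (i + n) / (A (i + n)) ^ 2) ≤ (n : ℝ) ^ (α - 1 + ε) :=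
  stmt_3_general a ha A hA α hlower
end

section
/- Let (a_i)_{i≥1} be bounded positive reals with partial sums A_i, and let (U_i, V_i)_{i≥1} be independent uniform (0,1) random variables. Define X = ∑_{i=1}^∞ a_i V_i 1_{U_i ≤ a_i/A_i}. If H(a) := ∑_{i≥1} a_i²/A_i < ∞, then for every λ ∈ [0, (sup_i a_i)^{-1}], one has E[exp(λ X)] ≤ exp(λ H(a)). -/
/-!
Write `Y i = a i * V i * 1{U i ≤ a i / A i}`. For `t = λ a i ≤ 1` and `v ∈ [0, 1]` one has
`exp (t v) ≤ 1 + t (1 + t) v`, and `E[V i * 1{U i ≤ p}] ≤ p / 2` by independence of `U i` and `V i`;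
hence `E[exp (λ Y i)] ≤ 1 + t (1 + t) p / 2 ≤ 1 + t p ≤ exp (t p)` with `t p = λ a i ^ 2 / A i`.
The `Y i` are independent, so the bound multiplies over finite partial sums, and monotone
convergence passes to the whole series since the `Y i` are nonnegative.
-/

open MeasureTheory ProbabilityTheory

namespace Real

lemma exp_le_one_add_add_sq {x : ℝ} (h0 : 0 ≤ x) (h1 : x ≤ 1) : exp x ≤ 1 + x + x ^ 2 := by
  have h := exp_bound' h0 h1 (n := 2) (by norm_num)
  norm_num [Finset.sum_range_succ] at h
  nlinarith [sq_nonneg x]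

lemma exp_mul_le_one_add_mul {s v : ℝ} (hs0 : 0 ≤ s) (hs1 : s ≤ 1) (hv0 : 0 ≤ v) (hv1 : v ≤ 1) :
    exp (s * v) ≤ 1 + s * (1 + s) * v :=
  calc exp (s * v) ≤ 1 + s * v + (s * v) ^ 2 :=
        exp_le_one_add_add_sq (mul_nonneg hs0 hv0) (mul_le_one₀ hs1 hv0 hv1)
    _ ≤ 1 + s * (1 + s) * v := by
        nlinarith [mul_nonneg (mul_nonneg hs0 hs0) (mul_nonneg hv0 (sub_nonneg.2 hv1))]

end Real

lemma setIntegral_Ioo_zero_one_id : ∫ x in Set.Ioo (0 : ℝ) 1, x = 1 / 2 := by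
  rw [← integral_Ioc_eq_integral_Ioo, ← intervalIntegral.integral_of_le zero_le_one]
  simp [integral_id]

lemma measureReal_restrict_Ioo_Iic_le {p : ℝ} (hp : 0 ≤ p) :
    (volume.restrict (Set.Ioo (0 : ℝ) 1)).real (Set.Iic p) ≤ p := by
  refine ENNReal.toReal_le_of_le_ofReal hp ?_
  rw [Measure.restrict_apply measurableSet_Iic, ← sub_zero p, ← Real.volume_Ioc]
  exact measure_mono fun x ⟨hxp, hx0, _⟩ => ⟨hx0, by simpa using hxp⟩

lemma mul_le_one_of_le_inv_ciSup {ι : Type*} {a : ι → ℝ} (hbdd : BddAbove (Set.range a))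
    {lam : ℝ} (hlam : lam ≤ (⨆ j, a j)⁻¹) {i : ι} (hai : 0 ≤ a i) : lam * a i ≤ 1 :=
  (mul_le_mul hlam (le_ciSup hbdd i) hai (inv_nonneg.2 (hai.trans (le_ciSup hbdd i)))).trans
    inv_mul_le_one

lemma measurable_mul_mul_ite_le {α : Type*} [MeasurableSpace α] {f g : α → ℝ}
    (hf : Measurable f) (hg : Measurable g) (c p : ℝ) :
    Measurable fun x => c * f x * if g x ≤ p then 1 else 0 := by
  have : Measurable fun x => if g x ≤ p then (1 : ℝ) else 0 :=
    Measurable.ite (measurableSet_le hg measurable_const) measurable_const measurable_const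
  fun_prop

namespace ProbabilityTheory

variable {Ω : Type*} [MeasurableSpace Ω] {μ : Measure Ω}

lemma iIndepFun.curry {ι κ 𝓧 : Type*} [MeasurableSpace 𝓧] {X : ι × κ → Ω → 𝓧}
    (hX : ∀ p, Measurable (X p)) (h : iIndepFun X μ) :
    iIndepFun (fun i ω j => X (i, j) ω) μ := by
  have := h.isProbabilityMeasure
  have hrow (i : ι) :
      μ.map (fun ω j => X (i, j) ω) = Measure.infinitePi fun j => μ.map (X (i, j)) :=
    (h.precomp (Prod.mk_right_injective i)).map_fun_eq_infinitePi_map fun j => hX _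
  rw [iIndepFun_iff_map_fun_eq_infinitePi_map fun i => measurable_pi_lambda _ fun j => hX _]
  simp_rw [hrow]
  have hcurry : (fun ω i j => X (i, j) ω) = MeasurableEquiv.curry ι κ 𝓧 ∘ fun ω p => X p ω := rfl
  rw [hcurry, ← Measure.map_map (MeasurableEquiv.measurable _) (measurable_pi_lambda _ hX),
    h.map_fun_eq_infinitePi_map hX]
  have _ (p : ι × κ) : IsProbabilityMeasure (μ.map (X p)) :=
    Measure.isProbabilityMeasure_map (hX p).aemeasurable
  exact Measure.infinitePi_map_curry fun i j => μ.map (X (i, j))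

lemma ae_mem_Ioo_of_map_eq {V : Ω → ℝ} (hV : Measurable V)
    (hlaw : μ.map V = volume.restrict (Set.Ioo 0 1)) : ∀ᵐ ω ∂μ, V ω ∈ Set.Ioo (0 : ℝ) 1 :=
  ae_of_ae_map hV.aemeasurable (hlaw ▸ ae_restrict_mem measurableSet_Ioo)

lemma lintegral_exp_mul_mul_ite_le [IsProbabilityMeasure μ] {U V : Ω → ℝ}
    (hU : Measurable U) (hV : Measurable V) (hUV : IndepFun V U μ)
    (hUlaw : μ.map U = volume.restrict (Set.Ioo 0 1))
    (hVlaw : μ.map V = volume.restrict (Set.Ioo 0 1))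
    {s p : ℝ} (hs0 : 0 ≤ s) (hs1 : s ≤ 1) (hp : 0 ≤ p) :
    ∫⁻ ω, ENNReal.ofReal (Real.exp (s * V ω * if U ω ≤ p then 1 else 0)) ∂μ
      ≤ ENNReal.ofReal (Real.exp (s * p)) := by
  set B : Ω → ℝ := (Set.Iic p).indicator 1 ∘ U
  have hB_eq (ω : Ω) : (if U ω ≤ p then 1 else 0) = B ω := by
    simp [B, Set.indicator_apply]
  have hBm : Measurable B := (measurable_one.indicator measurableSet_Iic).comp hU
  have hW01 : ∀ᵐ ω ∂μ, 0 ≤ V ω * B ω ∧ V ω * B ω ≤ 1 := by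
    filter_upwards [ae_mem_Ioo_of_map_eq hV hVlaw] with ω ⟨h0, h1⟩
    by_cases h : U ω ≤ p <;> simp [B, h, h0.le, h1.le]
  have hWint : Integrable (fun ω => V ω * B ω) μ := by
    refine Integrable.of_bound (hV.mul hBm).aestronglyMeasurable 1 ?_
    filter_upwards [hW01] with ω h
    rw [Real.norm_eq_abs, abs_le]
    constructor <;> linarith [h.1, h.2]
  have hEW : ∫ ω, V ω * B ω ∂μ ≤ p / 2 := by
    have hVB : IndepFun V B μ :=
      hUV.comp measurable_id (measurable_one.indicator measurableSet_Iic)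
    have hEV : ∫ ω, V ω ∂μ = 1 / 2 := by
      rw [← integral_map (f := fun x => x) hV.aemeasurable aestronglyMeasurable_id, hVlaw,
        setIntegral_Ioo_zero_one_id]
    have hEB : ∫ ω, B ω ∂μ ≤ p := by
      change ∫ ω, (Set.Iic p).indicator 1 (U ω) ∂μ ≤ p
      rw [← integral_map hU.aemeasurable
        (measurable_one.indicator measurableSet_Iic).aestronglyMeasurable, hUlaw,
        integral_indicator_one measurableSet_Iic]
      exact measureReal_restrict_Ioo_Iic_le hp
    rw [hVB.integral_fun_mul_eq_mul_integral hV.aestronglyMeasurable hBm.aestronglyMeasurable, hEV]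
    linarith
  have hpt : ∀ᵐ ω ∂μ, ENNReal.ofReal (Real.exp (s * V ω * if U ω ≤ p then 1 else 0))
      ≤ ENNReal.ofReal (1 + s * (1 + s) * (V ω * B ω)) := by
    filter_upwards [hW01] with ω ⟨h0, h1⟩
    rw [hB_eq, mul_assoc]
    exact ENNReal.ofReal_le_ofReal (Real.exp_mul_le_one_add_mul hs0 hs1 h0 h1)
  calc ∫⁻ ω, ENNReal.ofReal (Real.exp (s * V ω * if U ω ≤ p then 1 else 0)) ∂μ
      ≤ ∫⁻ ω, ENNReal.ofReal (1 + s * (1 + s) * (V ω * B ω)) ∂μ := lintegral_mono_ae hpt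
    _ = ENNReal.ofReal (∫ ω, 1 + s * (1 + s) * (V ω * B ω) ∂μ) := by
      refine (ofReal_integral_eq_lintegral_ofReal ((integrable_const 1).add (hWint.const_mul _))
        ?_).symm
      filter_upwards [hW01] with ω ⟨h0, _⟩
      have : 0 ≤ s * (1 + s) * (V ω * B ω) := mul_nonneg (by positivity) h0
      simp only [Pi.zero_apply, Pi.add_apply]
      linarith
    _ ≤ ENNReal.ofReal (Real.exp (s * p)) := by
      refine ENNReal.ofReal_le_ofReal ?_
      rw [integral_add (integrable_const 1) (hWint.const_mul _), integral_const,
        integral_const_mul, probReal_univ, one_smul]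
      -- `s * (1 + s) / 2 ≤ s` because `s ≤ 1`
      nlinarith [Real.add_one_le_exp (s * p), mul_nonneg (mul_nonneg hs0 hp) (sub_nonneg.2 hs1),
        mul_le_mul_of_nonneg_left hEW (by positivity : 0 ≤ s * (1 + s))]

lemma iIndepFun.lintegral_exp_sum_le {ι : Type*} {Y : ι → Ω → ℝ} (hindep : iIndepFun Y μ)
    (hY : ∀ i, Measurable (Y i)) {b : ι → ℝ}
    (hb : ∀ i, ∫⁻ ω, ENNReal.ofReal (Real.exp (Y i ω)) ∂μ ≤ ENNReal.ofReal (Real.exp (b i)))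
    (s : Finset ι) :
    ∫⁻ ω, ENNReal.ofReal (Real.exp (∑ i ∈ s, Y i ω)) ∂μ
      ≤ ENNReal.ofReal (Real.exp (∑ i ∈ s, b i)) := by
  have hexp (f : ι → ℝ) :
      ENNReal.ofReal (Real.exp (∑ i ∈ s, f i)) = ∏ i ∈ s, ENNReal.ofReal (Real.exp (f i)) := by
    rw [Real.exp_sum, ENNReal.ofReal_prod_of_nonneg fun i _ => (Real.exp_pos _).le]
  simp_rw [hexp]
  refine (lintegral_prod_eq_prod_lintegral_of_indepFun s _
    (hindep.comp (fun _ x => ENNReal.ofReal (Real.exp x))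
      fun _ => Real.measurable_exp.ennreal_ofReal) fun i =>
        (Real.measurable_exp.comp (hY i)).ennreal_ofReal).trans_le ?_
  exact Finset.prod_le_prod' fun i _ => hb i

lemma integral_exp_tsum_le {Y : ℕ → Ω → ℝ} (hY : ∀ i, Measurable (Y i))
    (hY0 : ∀ᵐ ω ∂μ, ∀ i, 0 ≤ Y i ω) {C : ℝ} (hC : 0 ≤ C)
    (hsum : ∀ n, ∫⁻ ω, ENNReal.ofReal (Real.exp (∑ i ∈ Finset.range n, Y i ω)) ∂μ
      ≤ ENNReal.ofReal C) :
    ∫ ω, Real.exp (∑' i, Y i ω) ∂μ ≤ C := by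
  set F : ℕ → Ω → ENNReal := fun n ω => ENNReal.ofReal (Real.exp (∑ i ∈ Finset.range n, Y i ω))
  have hF_mono : ∀ᵐ ω ∂μ, Monotone fun n => F n ω := by
    filter_upwards [hY0] with ω hω m n hmn
    exact ENNReal.ofReal_le_ofReal (Real.exp_le_exp.2 (Finset.sum_le_sum_of_subset_of_nonneg
      (Finset.range_subset_range.2 hmn) fun i _ _ => hω i))
  have hF_sup : ∀ᵐ ω ∂μ, ENNReal.ofReal (Real.exp (∑' i, Y i ω)) ≤ ⨆ n, F n ω := by
    filter_upwards [hY0] with ω hω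
    by_cases hs : Summable fun i => Y i ω
    · exact le_of_tendsto'
        ((ENNReal.continuous_ofReal.comp Real.continuous_exp).continuousAt.tendsto.comp
          hs.hasSum.tendsto_sum_nat) fun n => le_iSup (fun k => F k ω) n
    · simpa [tsum_eq_zero_of_not_summable hs, F] using le_iSup (fun k => F k ω) 0
  have hlint : ∫⁻ ω, ENNReal.ofReal (Real.exp (∑' i, Y i ω)) ∂μ ≤ ENNReal.ofReal C :=
    calc _ ≤ ∫⁻ ω, ⨆ n, F n ω ∂μ := lintegral_mono_ae hF_sup
      _ = ⨆ n, ∫⁻ ω, F n ω ∂μ := lintegral_iSup' (fun n => (Real.measurable_exp.comp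
          (Finset.measurable_sum _ fun i _ => hY i)).ennreal_ofReal.aemeasurable) hF_mono
      _ ≤ ENNReal.ofReal C := iSup_le hsum
  by_cases hm : AEStronglyMeasurable (fun ω => Real.exp (∑' i, Y i ω)) μ
  · rw [integral_eq_lintegral_of_nonneg_ae (ae_of_all _ fun _ => (Real.exp_pos _).le) hm]
    exact ENNReal.toReal_le_of_le_ofReal hC hlint
  · rwa [integral_non_aestronglyMeasurable hm]

end ProbabilityTheory

/-- Exponential moment bound: if the `a i` are positive and bounded,
`H(a) = ∑ a i ^2 / A i < ∞` and `X = ∑ a i * V i * 1_{U i ≤ a i / A i}`, then for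
`0 ≤ λ ≤ (sup_i a i)⁻¹` we have `E[exp (λ X)] ≤ exp (λ H(a))`. -/
theorem stmt_5 {Ω : Type*} [MeasureSpace Ω] (hprob : IsProbabilityMeasure (ℙ : Measure Ω))
    (a : ℕ → ℝ) (ha : ∀ i, 0 < a i) (hbdd : BddAbove (Set.range a))
    (A : ℕ → ℝ) (hA : ∀ n, A n = ∑ i ∈ Finset.range (n + 1), a i)
    (hH : Summable (fun i => (a i) ^ 2 / A i))
    (X : ℕ × Bool → Ω → ℝ) (hmeas : ∀ p, Measurable (X p))
    (hindep : iIndepFun (m := fun _ => Real.measurableSpace) X ℙ)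
    (hunif : ∀ p, Measure.map (X p) ℙ = volume.restrict (Set.Ioo (0 : ℝ) 1))
    (U V : ℕ → Ω → ℝ) (hU : ∀ i, U i = X (i, true)) (hV : ∀ i, V i = X (i, false))
    (lam : ℝ) (hlam0 : 0 ≤ lam) (hlam1 : lam ≤ (⨆ i, a i)⁻¹) :
    ∫ ω, Real.exp (lam * ∑' i : ℕ,
        a i * V i ω * (if U i ω ≤ a i / A i then (1 : ℝ) else 0)) ∂ℙ
      ≤ Real.exp (lam * ∑' i : ℕ, (a i) ^ 2 / A i) := by
  obtain rfl : U = fun i => X (i, true) := funext hU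
  obtain rfl : V = fun i => X (i, false) := funext hV
  have hA_pos (i : ℕ) : 0 < A i := hA i ▸ Finset.sum_pos (fun j _ => ha j) ⟨0, by simp⟩
  set Y : ℕ → Ω → ℝ := fun i ω =>
    lam * a i * X (i, false) ω * if X (i, true) ω ≤ a i / A i then 1 else 0
  have hYm (i : ℕ) : Measurable (Y i) := measurable_mul_mul_ite_le (hmeas _) (hmeas _) _ _
  have hYindep : iIndepFun Y ℙ := (hindep.curry hmeas).comp
    (fun i x => lam * a i * x false * if x true ≤ a i / A i then 1 else 0) fun i =>
    measurable_mul_mul_ite_le (measurable_pi_apply false) (measurable_pi_apply true)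
      (lam * a i) (a i / A i)
  have hY0 : ∀ᵐ ω ∂ℙ, ∀ i, 0 ≤ Y i ω := ae_all_iff.2 fun i => by
    filter_upwards [ae_mem_Ioo_of_map_eq (hmeas _) (hunif (i, false))] with ω hω
    exact mul_nonneg (mul_nonneg (mul_nonneg hlam0 (ha i).le) hω.1.le) (by split_ifs <;> norm_num)
  have hfactor (i : ℕ) : ∫⁻ ω, ENNReal.ofReal (Real.exp (Y i ω)) ∂ℙ
      ≤ ENNReal.ofReal (Real.exp (lam * (a i ^ 2 / A i))) :=
    (lintegral_exp_mul_mul_ite_le (hmeas (i, true)) (hmeas (i, false))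
      (hindep.indepFun (by simp)) (hunif _) (hunif _) (mul_nonneg hlam0 (ha i).le)
      (mul_le_one_of_le_inv_ciSup hbdd hlam1 (ha i).le) (div_pos (ha i) (hA_pos i)).le).trans_eq
      (by congr 2; ring)
  have hpartial (n : ℕ) : ∑ i ∈ Finset.range n, lam * (a i ^ 2 / A i)
      ≤ lam * ∑' i, a i ^ 2 / A i := by
    rw [← Finset.mul_sum]
    exact mul_le_mul_of_nonneg_left
      (hH.sum_le_tsum _ fun i _ => (div_pos (pow_pos (ha i) 2) (hA_pos i)).le) hlam0
  calc _ = ∫ ω, Real.exp (∑' i, Y i ω) ∂ℙ := by simp_rw [Y, ← tsum_mul_left, ← mul_assoc]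
    _ ≤ _ := integral_exp_tsum_le hYm hY0 (Real.exp_pos _).le fun n =>
      (hYindep.lintegral_exp_sum_le hYm hfactor _).trans
        (ENNReal.ofReal_le_ofReal (Real.exp_le_exp.2 (hpartial n)))
end

section
/- Let (a_i)_{i≥1} be bounded positive reals with partial sums A_i and let (U_i, V_i) be independent uniform (0,1) random variables. Then the series ∑_{i≥1} a_i V_i 1_{U_i ≤ a_i/A_i} converges almost surely if and only if ∑_{i≥1} a_i²/A_i < ∞. -/
open MeasureTheory ProbabilityTheory Filter

/-!
Put `Yᵢ = aᵢ Vᵢ 1{Uᵢ ≤ aᵢ/Aᵢ}`, independent and a.s. nonnegative, so that a.s. convergence of the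
series means `∑ Yᵢ < ∞` a.s. Since `E Yᵢ ≤ aᵢ²/Aᵢ`, summability of `aᵢ²/Aᵢ` gives `E ∑ Yᵢ < ∞`.
Conversely, by independence `∏_{i<n} E e^{-Yᵢ} = E e^{-∑_{i<n} Yᵢ}`, which decreases to
`E e^{-∑ Yᵢ} > 0` when `∑ Yᵢ < ∞` a.s.; a convergent product with positive limit forces
`∑ (1 - E e^{-Yᵢ}) < ∞`. Finally `Yᵢ ≥ aᵢ/2` on `{Uᵢ ≤ aᵢ/Aᵢ, Vᵢ ≥ 1/2}`, an event of probability
`aᵢ/(2Aᵢ)`, so for bounded `aᵢ` the term `1 - E e^{-Yᵢ}` is at least a constant times `aᵢ²/Aᵢ`.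
-/

open Real Set

theorem ProbabilityTheory.iIndepFun.curry_s6 {ι κ Ω 𝓧 : Type*} {mΩ : MeasurableSpace Ω}
    [MeasurableSpace 𝓧] {P : Measure Ω} {X : ι × κ → Ω → 𝓧} (mX : ∀ p, Measurable (X p))
    (h : iIndepFun X P) :
    iIndepFun (fun i ω j ↦ X (i, j) ω) P := by
  have := h.isProbabilityMeasure
  have : ∀ p, IsProbabilityMeasure (P.map (X p)) :=
    fun p ↦ Measure.isProbabilityMeasure_map (mX p).aemeasurable
  have hrow (i : ι) :
      P.map (fun ω j ↦ X (i, j) ω) = Measure.infinitePi fun j ↦ P.map (X (i, j)) :=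
    (iIndepFun_iff_map_fun_eq_infinitePi_map fun j ↦ mX (i, j)).1
      (h.precomp (Prod.mk_right_injective i))
  rw [iIndepFun_iff_map_fun_eq_infinitePi_map fun i ↦ measurable_pi_lambda _ fun j ↦ mX (i, j)]
  simp_rw [hrow]
  rw [← Measure.infinitePi_map_curry (fun i j ↦ P.map (X (i, j))),
    ← (iIndepFun_iff_map_fun_eq_infinitePi_map mX).1 h,
    Measure.map_map (by fun_prop) (by fun_prop)]
  rfl

theorem exists_tendsto_sum_range_iff_summable {f : ℕ → ℝ} (hf : ∀ i, 0 ≤ f i) :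
    (∃ L, Tendsto (fun n ↦ ∑ i ∈ Finset.range n, f i) atTop (nhds L)) ↔ Summable f := by
  simp_rw [← hasSum_iff_tendsto_nat_of_nonneg hf]
  rfl

theorem div_sum_range_succ_mem_Icc {a : ℕ → ℝ} (ha : ∀ i, 0 ≤ a i) (i : ℕ) :
    a i / ∑ j ∈ Finset.range (i + 1), a j ∈ Icc 0 1 :=
  ⟨div_nonneg (ha i) (Finset.sum_nonneg fun j _ ↦ ha j),
    div_le_one_of_le₀ (Finset.single_le_sum (fun j _ ↦ ha j) (Finset.self_mem_range_succ i))
      (Finset.sum_nonneg fun j _ ↦ ha j)⟩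

theorem summable_one_sub_of_tendsto_prod {q : ℕ → ℝ} {L : ℝ} (hq0 : ∀ i, 0 < q i)
    (hq1 : ∀ i, q i ≤ 1) (hL : 0 < L)
    (hlim : Tendsto (fun n ↦ ∏ i ∈ Finset.range n, q i) atTop (nhds L)) :
    Summable fun i ↦ 1 - q i := by
  have hanti : Antitone fun n ↦ ∏ i ∈ Finset.range n, q i := by
    refine antitone_nat_of_succ_le fun n ↦ ?_
    rw [Finset.prod_range_succ]
    exact mul_le_of_le_one_right (Finset.prod_nonneg fun i _ ↦ (hq0 i).le) (hq1 n)
  refine summable_of_sum_range_le (c := -log L) (fun i ↦ sub_nonneg.2 (hq1 i)) fun n ↦ ?_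
  calc ∑ i ∈ Finset.range n, (1 - q i) ≤ ∑ i ∈ Finset.range n, -log (q i) :=
        Finset.sum_le_sum fun i _ ↦ by linarith [log_le_sub_one_of_pos (hq0 i)]
    _ = -log (∏ i ∈ Finset.range n, q i) := by
        rw [log_prod fun i _ ↦ (hq0 i).ne', Finset.sum_neg_distrib]
    _ ≤ -log L := neg_le_neg (log_le_log hL (hanti.le_of_tendsto hlim n))

theorem Real.le_exp_mul_one_sub_exp_neg {x M : ℝ} (hx : 0 ≤ x) (hxM : x ≤ M) :
    x ≤ exp M * (1 - exp (-x)) := by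
  have hexp : exp x * (1 - exp (-x)) = exp x - 1 := by
    rw [mul_sub, ← exp_add, add_neg_cancel, exp_zero, mul_one]
  calc x ≤ exp x * (1 - exp (-x)) := by linarith [add_one_le_exp x]
    _ ≤ exp M * (1 - exp (-x)) :=
        mul_le_mul_of_nonneg_right (exp_le_exp.2 hxM)
          (sub_nonneg.2 (exp_le_one_iff.2 (neg_nonpos.2 hx)))

theorem Real.volume_eq_of_Ioo_subset_of_subset_Icc {s : Set ℝ} {l r : ℝ} (h₁ : Ioo l r ⊆ s)
    (h₂ : s ⊆ Icc l r) : volume s = ENNReal.ofReal (r - l) :=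
  le_antisymm ((measure_mono h₂).trans_eq Real.volume_Icc)
    (Real.volume_Ioo.symm.trans_le (measure_mono h₁))

section Probability

variable {Ω : Type*} {mΩ : MeasurableSpace Ω} {μ : Measure Ω}

theorem ae_summable_of_summable_integral {Y : ℕ → Ω → ℝ} (hnn : ∀ i, 0 ≤ᵐ[μ] Y i)
    (hint : ∀ i, Integrable (Y i) μ) (hsum : Summable fun i ↦ ∫ ω, Y i ω ∂μ) :
    ∀ᵐ ω ∂μ, Summable fun i ↦ Y i ω := by
  have hmeas (i : ℕ) : AEMeasurable (fun ω ↦ ENNReal.ofReal (Y i ω)) μ :=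
    (hint i).aestronglyMeasurable.aemeasurable.ennreal_ofReal
  have hfin : ∫⁻ ω, ∑' i, ENNReal.ofReal (Y i ω) ∂μ ≠ ⊤ := by
    rw [lintegral_tsum hmeas]
    simp_rw [← ofReal_integral_eq_lintegral_ofReal (hint _) (hnn _)]
    rw [← ENNReal.ofReal_tsum_of_nonneg (fun i ↦ integral_nonneg_of_ae (hnn i)) hsum]
    exact ENNReal.ofReal_ne_top
  filter_upwards [ae_lt_top' (AEMeasurable.tsum hmeas) hfin, ae_all_iff.2 hnn] with ω hω hω0
  exact (ENNReal.summable_toReal hω.ne).congr fun i ↦ ENNReal.toReal_ofReal (hω0 i)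

theorem integrable_exp_neg_of_nonneg [IsFiniteMeasure μ] {f : Ω → ℝ}
    (hf : AEStronglyMeasurable f μ) (hnn : 0 ≤ᵐ[μ] f) : Integrable (fun ω ↦ exp (-f ω)) μ :=
  .of_bound (continuous_exp.comp_aestronglyMeasurable hf.neg) 1 <| by
    filter_upwards [hnn] with ω hω
    simpa [abs_of_pos (exp_pos _)] using hω

theorem integral_exp_neg_le_one_sub [IsProbabilityMeasure μ] {Y : Ω → ℝ} {E : Set Ω} {b : ℝ}
    (hY : AEStronglyMeasurable Y μ) (hE : MeasurableSet E) (hnn : 0 ≤ᵐ[μ] Y)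
    (hb : ∀ᵐ ω ∂μ, ω ∈ E → b ≤ Y ω) :
    ∫ ω, exp (-Y ω) ∂μ ≤ 1 - (1 - exp (-b)) * μ.real E := by
  have hind : Integrable (E.indicator fun _ ↦ (1 : ℝ)) μ := (integrable_const 1).indicator hE
  calc ∫ ω, exp (-Y ω) ∂μ ≤ ∫ ω, 1 - (1 - exp (-b)) * E.indicator (fun _ ↦ (1 : ℝ)) ω ∂μ := by
        refine integral_mono_ae (integrable_exp_neg_of_nonneg hY hnn)
          ((integrable_const 1).sub (hind.const_mul _)) ?_
        filter_upwards [hnn, hb] with ω h0 hbω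
        by_cases hω : ω ∈ E
        · simpa [hω] using exp_le_exp.2 (neg_le_neg (hbω hω))
        · simpa [hω] using h0
    _ = 1 - (1 - exp (-b)) * μ.real E := by
        rw [integral_sub (integrable_const 1) (hind.const_mul _), integral_const_mul,
          integral_indicator_const _ hE]
        simp

theorem integral_exp_neg_sum_range {Y : ℕ → Ω → ℝ} (hindep : iIndepFun Y μ)
    (hmeas : ∀ i, Measurable (Y i)) (n : ℕ) :
    ∫ ω, exp (-∑ i ∈ Finset.range n, Y i ω) ∂μ =
      ∏ i ∈ Finset.range n, ∫ ω, exp (-Y i ω) ∂μ := by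
  have hZ : iIndepFun (fun (i : Finset.range n) ω ↦ exp (-Y i ω)) μ :=
    (hindep.comp (fun _ y ↦ exp (-y)) fun _ ↦ by fun_prop).precomp Subtype.val_injective
  simp_rw [← Finset.sum_neg_distrib, exp_sum, ← Finset.prod_coe_sort (Finset.range n)]
  exact hZ.integral_fun_prod_eq_prod_integral
    fun i ↦ (by fun_prop : Measurable fun ω ↦ exp (-Y i ω)).aestronglyMeasurable

theorem tendsto_prod_integral_exp_neg {Y : ℕ → Ω → ℝ} (hindep : iIndepFun Y μ)
    (hmeas : ∀ i, Measurable (Y i)) (hnn : ∀ i, 0 ≤ᵐ[μ] Y i)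
    (hsum : ∀ᵐ ω ∂μ, Summable fun i ↦ Y i ω) :
    Tendsto (fun n ↦ ∏ i ∈ Finset.range n, ∫ ω, exp (-Y i ω) ∂μ) atTop
      (nhds (∫ ω, exp (-∑' i, Y i ω) ∂μ)) := by
  have := hindep.isProbabilityMeasure
  simp_rw [← integral_exp_neg_sum_range hindep hmeas]
  refine tendsto_integral_of_dominated_convergence (fun _ ↦ 1)
    (fun n ↦ by fun_prop) (integrable_const 1) (fun n ↦ ?_) ?_
  · filter_upwards [ae_all_iff.2 hnn] with ω hω
    simpa using Finset.sum_nonneg fun i _ ↦ hω i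
  · filter_upwards [hsum] with ω hω
    exact (continuous_exp.tendsto _).comp hω.hasSum.tendsto_sum_nat.neg

theorem summable_one_sub_integral_exp_neg_of_ae_summable {Y : ℕ → Ω → ℝ}
    (hindep : iIndepFun Y μ) (hmeas : ∀ i, Measurable (Y i)) (hnn : ∀ i, 0 ≤ᵐ[μ] Y i)
    (hsum : ∀ᵐ ω ∂μ, Summable fun i ↦ Y i ω) :
    Summable fun i ↦ 1 - ∫ ω, exp (-Y i ω) ∂μ := by
  have := hindep.isProbabilityMeasure
  have hint (i : ℕ) : Integrable (fun ω ↦ exp (-Y i ω)) μ :=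
    integrable_exp_neg_of_nonneg (hmeas i).aestronglyMeasurable (hnn i)
  have hq_le (i : ℕ) : ∫ ω, exp (-Y i ω) ∂μ ≤ 1 := by
    refine (integral_mono_ae (hint i) (integrable_const 1) ?_).trans_eq (by simp)
    filter_upwards [hnn i] with ω hω
    simpa using hω
  have hL : 0 < ∫ ω, exp (-∑' i, Y i ω) ∂μ := by
    refine integral_exp_pos (integrable_exp_neg_of_nonneg
      (Measurable.tsum hmeas).aestronglyMeasurable ?_)
    filter_upwards [ae_all_iff.2 hnn] with ω hω using tsum_nonneg hω
  exact summable_one_sub_of_tendsto_prod (fun i ↦ integral_exp_pos (hint i)) hq_le hL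
    (tendsto_prod_integral_exp_neg hindep hmeas hnn hsum)

theorem ae_mem_Ioo_of_map_eq_uniform {X : Ω → ℝ} (hX : AEMeasurable X μ)
    (hunif : μ.map X = volume.restrict (Ioo 0 1)) : ∀ᵐ ω ∂μ, X ω ∈ Ioo (0 : ℝ) 1 :=
  ae_of_ae_map hX (hunif ▸ ae_restrict_mem measurableSet_Ioo)

theorem measureReal_preimage_of_map_eq_uniform {X : Ω → ℝ} (hX : Measurable X)
    (hunif : μ.map X = volume.restrict (Ioo 0 1)) {s : Set ℝ} (hs : MeasurableSet s) {l r : ℝ}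
    (hlr : l ≤ r) (h₁ : Ioo l r ⊆ s ∩ Ioo 0 1) (h₂ : s ∩ Ioo 0 1 ⊆ Icc l r) :
    μ.real (X ⁻¹' s) = r - l := by
  rw [measureReal_def, ← Measure.map_apply hX hs, hunif, Measure.restrict_apply hs,
    Real.volume_eq_of_Ioo_subset_of_subset_Icc h₁ h₂, ENNReal.toReal_ofReal (sub_nonneg.2 hlr)]

theorem measureReal_preimage_Iic_of_map_eq_uniform {X : Ω → ℝ} (hX : Measurable X)
    (hunif : μ.map X = volume.restrict (Ioo 0 1)) {t : ℝ} (ht0 : 0 ≤ t) (ht1 : t ≤ 1) :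
    μ.real (X ⁻¹' Iic t) = t := by
  simpa using measureReal_preimage_of_map_eq_uniform hX hunif measurableSet_Iic ht0
    (fun x hx ↦ ⟨hx.2.le, hx.1, hx.2.trans_le ht1⟩) (fun x hx ↦ ⟨hx.2.1.le, hx.1⟩)

theorem measureReal_preimage_Ici_of_map_eq_uniform {X : Ω → ℝ} (hX : Measurable X)
    (hunif : μ.map X = volume.restrict (Ioo 0 1)) {t : ℝ} (ht0 : 0 ≤ t) (ht1 : t ≤ 1) :
    μ.real (X ⁻¹' Ici t) = 1 - t :=
  measureReal_preimage_of_map_eq_uniform hX hunif measurableSet_Ici ht1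
    (fun _ hx ↦ ⟨hx.1.le, ht0.trans_lt hx.1, hx.2⟩) (fun _ hx ↦ ⟨hx.1, hx.2.2.le⟩)

end Probability

noncomputable def thinned (c t u v : ℝ) : ℝ := c * v * if u ≤ t then 1 else 0

theorem Measurable.thinned {α : Type*} [MeasurableSpace α] {f g : α → ℝ} (hf : Measurable f)
    (hg : Measurable g) (c t : ℝ) : Measurable fun x ↦ thinned c t (f x) (g x) :=
  (measurable_const.mul hg).mul
    (Measurable.ite (measurableSet_le hf measurable_const) measurable_const measurable_const)

theorem thinned_nonneg {c v : ℝ} (hc : 0 ≤ c) (hv : 0 ≤ v) (t u : ℝ) :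
    0 ≤ thinned c t u v := by
  unfold thinned
  positivity

theorem thinned_le_indicator {c v : ℝ} (hc : 0 ≤ c) (hv : v ≤ 1) (t u : ℝ) :
    thinned c t u v ≤ (Iic t).indicator (fun _ ↦ c) u := by
  by_cases hu : u ≤ t
  · simpa [thinned, hu] using mul_le_of_le_one_right hc hv
  · simp [thinned, hu]

theorem half_le_thinned {c t u v : ℝ} (hc : 0 ≤ c) (hu : u ≤ t) (hv : 1 / 2 ≤ v) :
    c / 2 ≤ thinned c t u v := by
  simp only [thinned, if_pos hu]
  nlinarith

section Thinning

variable {Ω : Type*} {mΩ : MeasurableSpace Ω} {μ : Measure Ω} {U V : Ω → ℝ} {c t : ℝ}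

theorem ae_thinned_nonneg (hV : Measurable V) (hVu : μ.map V = volume.restrict (Ioo 0 1))
    (hc : 0 ≤ c) : 0 ≤ᵐ[μ] fun ω ↦ thinned c t (U ω) (V ω) := by
  filter_upwards [ae_mem_Ioo_of_map_eq_uniform hV.aemeasurable hVu] with ω hω
  exact thinned_nonneg hc hω.1.le _ _

theorem ae_thinned_le_indicator (hV : Measurable V)
    (hVu : μ.map V = volume.restrict (Ioo 0 1)) (hc : 0 ≤ c) :
    ∀ᵐ ω ∂μ, thinned c t (U ω) (V ω) ≤ (U ⁻¹' Iic t).indicator (fun _ ↦ c) ω := by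
  filter_upwards [ae_mem_Ioo_of_map_eq_uniform hV.aemeasurable hVu] with ω hω
  exact thinned_le_indicator hc hω.2.le _ _

theorem integrable_thinned [IsFiniteMeasure μ] (hU : Measurable U) (hV : Measurable V)
    (hVu : μ.map V = volume.restrict (Ioo 0 1)) (hc : 0 ≤ c) :
    Integrable (fun ω ↦ thinned c t (U ω) (V ω)) μ := by
  refine .of_bound (hU.thinned hV c t).aestronglyMeasurable c ?_
  filter_upwards [ae_thinned_nonneg hV hVu hc, ae_thinned_le_indicator hV hVu hc] with ω h0 h1
  rw [Real.norm_of_nonneg h0]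
  exact h1.trans (indicator_le_self' (fun _ _ ↦ hc) ω)

theorem integral_thinned_le [IsFiniteMeasure μ] (hU : Measurable U)
    (hUu : μ.map U = volume.restrict (Ioo 0 1)) (hV : Measurable V)
    (hVu : μ.map V = volume.restrict (Ioo 0 1)) (hc : 0 ≤ c) (ht0 : 0 ≤ t) (ht1 : t ≤ 1) :
    ∫ ω, thinned c t (U ω) (V ω) ∂μ ≤ c * t := by
  have hE : MeasurableSet (U ⁻¹' Iic t) := hU measurableSet_Iic
  calc ∫ ω, thinned c t (U ω) (V ω) ∂μ ≤ ∫ ω, (U ⁻¹' Iic t).indicator (fun _ ↦ c) ω ∂μ :=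
        integral_mono_ae (integrable_thinned hU hV hVu hc) ((integrable_const c).indicator hE)
          (ae_thinned_le_indicator hV hVu hc)
    _ = c * t := by
        rw [integral_indicator_const _ hE, smul_eq_mul, mul_comm,
          measureReal_preimage_Iic_of_map_eq_uniform hU hUu ht0 ht1]

theorem le_one_sub_integral_exp_neg_thinned [IsProbabilityMeasure μ] (hU : Measurable U)
    (hUu : μ.map U = volume.restrict (Ioo 0 1)) (hV : Measurable V)
    (hVu : μ.map V = volume.restrict (Ioo 0 1)) (hindep : IndepFun U V μ) (hc : 0 ≤ c)
    (ht0 : 0 ≤ t) (ht1 : t ≤ 1) :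
    (1 - exp (-(c / 2))) * (t / 2) ≤ 1 - ∫ ω, exp (-thinned c t (U ω) (V ω)) ∂μ := by
  have hE : μ.real (U ⁻¹' Iic t ∩ V ⁻¹' Ici (1 / 2)) = t / 2 := by
    rw [measureReal_def, hindep.measure_inter_preimage_eq_mul _ _ measurableSet_Iic
      measurableSet_Ici, ENNReal.toReal_mul, ← measureReal_def, ← measureReal_def,
      measureReal_preimage_Iic_of_map_eq_uniform hU hUu ht0 ht1,
      measureReal_preimage_Ici_of_map_eq_uniform hV hVu (by norm_num) (by norm_num)]
    ring
  have := integral_exp_neg_le_one_sub (hU.thinned hV c t).aestronglyMeasurable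
    ((hU measurableSet_Iic).inter (hV measurableSet_Ici)) (ae_thinned_nonneg hV hVu hc)
    (b := c / 2) (.of_forall fun ω hω ↦ half_le_thinned hc hω.1 hω.2)
  rw [hE] at this
  linarith

theorem mul_le_exp_mul_one_sub_integral_exp_neg_thinned [IsProbabilityMeasure μ] (hU : Measurable U)
    (hUu : μ.map U = volume.restrict (Ioo 0 1)) (hV : Measurable V)
    (hVu : μ.map V = volume.restrict (Ioo 0 1)) (hindep : IndepFun U V μ) {C : ℝ} (hc : 0 ≤ c)
    (hcC : c ≤ C) (ht0 : 0 ≤ t) (ht1 : t ≤ 1) :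
    c * t ≤ 4 * exp (C / 2) * (1 - ∫ ω, exp (-thinned c t (U ω) (V ω)) ∂μ) := by
  have hexp := le_exp_mul_one_sub_exp_neg (x := c / 2) (M := C / 2) (by linarith) (by linarith)
  calc c * t = 4 * (c / 2) * (t / 2) := by ring
    _ ≤ 4 * (exp (C / 2) * (1 - exp (-(c / 2)))) * (t / 2) := by gcongr
    _ ≤ 4 * exp (C / 2) * (1 - ∫ ω, exp (-thinned c t (U ω) (V ω)) ∂μ) := by
        rw [mul_assoc 4, mul_assoc, mul_assoc]
        gcongr
        exact le_one_sub_integral_exp_neg_thinned hU hUu hV hVu hindep hc ht0 ht1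

end Thinning

theorem stmt_6_general {Ω : Type*} [MeasureSpace Ω]
    (a : ℕ → ℝ) (ha : ∀ i, 0 < a i) (hbdd : BddAbove (Set.range a))
    (A : ℕ → ℝ) (hA : ∀ n, A n = ∑ i ∈ Finset.range (n + 1), a i)
    (X : ℕ × Bool → Ω → ℝ) (hmeas : ∀ p, Measurable (X p))
    (hindep : iIndepFun (m := fun _ => Real.measurableSpace) X ℙ)
    (hunif : ∀ p, Measure.map (X p) ℙ = volume.restrict (Set.Ioo (0 : ℝ) 1))
    (U V : ℕ → Ω → ℝ) (hU : ∀ i, U i = X (i, true)) (hV : ∀ i, V i = X (i, false)) :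
    (∀ᵐ ω ∂ℙ, ∃ L : ℝ, Tendsto (fun n => ∑ i ∈ Finset.range n,
        a i * V i ω * (if U i ω ≤ a i / A i then (1 : ℝ) else 0)) atTop (nhds L))
      ↔ Summable (fun i => (a i) ^ 2 / A i) := by
  have := hindep.isProbabilityMeasure
  obtain rfl : U = fun i ↦ X (i, true) := funext hU
  obtain rfl : V = fun i ↦ X (i, false) := funext hV
  obtain ⟨C, hC⟩ := hbdd
  have hp (i : ℕ) : a i / A i ∈ Icc 0 1 := hA i ▸ div_sum_range_succ_mem_Icc (fun j ↦ (ha j).le) i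
  set Y : ℕ → Ω → ℝ := fun i ω ↦ thinned (a i) (a i / A i) (X (i, true) ω) (X (i, false) ω)
  have hYnn (i : ℕ) : 0 ≤ᵐ[ℙ] Y i := ae_thinned_nonneg (hmeas _) (hunif _) (ha i).le
  have hYindep : iIndepFun Y ℙ :=
    (hindep.curry_s6 hmeas).comp (fun i x ↦ thinned (a i) (a i / A i) (x true) (x false)) fun i ↦
      (measurable_pi_apply true).thinned (measurable_pi_apply false) _ _
  have hr (i : ℕ) : a i ^ 2 / A i = a i * (a i / A i) := by ring
  change (∀ᵐ ω ∂ℙ, ∃ L, Tendsto (fun n ↦ ∑ i ∈ Finset.range n, Y i ω) atTop (nhds L)) ↔ _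
  rw [eventually_congr ((ae_all_iff.2 hYnn).mono fun ω hω ↦
    exists_tendsto_sum_range_iff_summable hω)]
  refine ⟨fun hsum ↦ ?_, fun hsum ↦ ?_⟩
  · refine .of_nonneg_of_le (fun i ↦ (hr i).symm ▸ mul_nonneg (ha i).le (hp i).1)
      (fun i ↦ (hr i).trans_le ?_) ((summable_one_sub_integral_exp_neg_of_ae_summable hYindep
        (fun i ↦ (hmeas _).thinned (hmeas _) _ _) hYnn hsum).mul_left (4 * exp (C / 2)))
    exact mul_le_exp_mul_one_sub_integral_exp_neg_thinned (hmeas _) (hunif _) (hmeas _) (hunif _)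
      (hindep.indepFun (by simp)) (ha i).le (hC ⟨i, rfl⟩) (hp i).1 (hp i).2
  · refine ae_summable_of_summable_integral hYnn
      (fun i ↦ integrable_thinned (hmeas _) (hmeas _) (hunif _) (ha i).le)
      (.of_nonneg_of_le (fun i ↦ integral_nonneg_of_ae (hYnn i)) (fun i ↦ ?_) hsum)
    rw [hr]
    exact integral_thinned_le (hmeas _) (hunif _) (hmeas _) (hunif _) (ha i).le (hp i).1 (hp i).2

/-- For bounded positive `a i`, the random series
`∑ a i * V i * 1_{U i ≤ a i / A i}` converges almost surely if and only if
`∑ a i ^ 2 / A i < ∞`. -/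
theorem stmt_6 {Ω : Type*} [MeasureSpace Ω] (hprob : IsProbabilityMeasure (ℙ : Measure Ω))
    (a : ℕ → ℝ) (ha : ∀ i, 0 < a i) (hbdd : BddAbove (Set.range a))
    (A : ℕ → ℝ) (hA : ∀ n, A n = ∑ i ∈ Finset.range (n + 1), a i)
    (X : ℕ × Bool → Ω → ℝ) (hmeas : ∀ p, Measurable (X p))
    (hindep : iIndepFun (m := fun _ => Real.measurableSpace) X ℙ)
    (hunif : ∀ p, Measure.map (X p) ℙ = volume.restrict (Set.Ioo (0 : ℝ) 1))
    (U V : ℕ → Ω → ℝ) (hU : ∀ i, U i = X (i, true)) (hV : ∀ i, V i = X (i, false)) :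
    (∀ᵐ ω ∂ℙ, ∃ L : ℝ, Tendsto (fun n => ∑ i ∈ Finset.range n,
        a i * V i ω * (if U i ω ≤ a i / A i then (1 : ℝ) else 0)) atTop (nhds L))
      ↔ Summable (fun i => (a i) ^ 2 / A i) :=
  stmt_6_general a ha hbdd A hA X hmeas hindep hunif U V hU hV
end

section
/- Let (T_n) be an increasing sequence of nonempty compact subsets of a complete metric space E such that ∑_{i≥1} d_H(T_{2^{i+1}}, T_{2^i}) < ∞, where d_H is the Hausdorff distance. Then the closure of ∪_n T_n is compact. -/
/-!
The sets `T (2 ^ i)` form a sequence of nonempty compacts whose consecutive Hausdorff distances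
are summable, hence a Cauchy sequence for the Hausdorff metric. The union of a Cauchy sequence of
compacts is totally bounded: past some index `N` every term lies in the `ε`-thickening of
`T (2 ^ N)`, and the finitely many earlier terms are compact. By monotonicity this union is
`⋃ n, T n`, whose closure is then compact because `E` is complete.
-/

open Metric TopologicalSpace

theorem Metric.totallyBounded_of_forall_subset_thickening {α : Type*} [PseudoMetricSpace α]
    {s : Set α} (h : ∀ ε > 0, ∃ t, TotallyBounded t ∧ s ⊆ thickening ε t) : TotallyBounded s := by
  rw [totallyBounded_iff]
  intro ε hε
  obtain ⟨t, ht, hst⟩ := h (ε / 2) (half_pos hε)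
  obtain ⟨c, hc, htc⟩ := totallyBounded_iff.mp ht (ε / 2) (half_pos hε)
  refine ⟨c, hc, fun x hx => ?_⟩
  obtain ⟨y, hy, hxy⟩ := mem_thickening_iff.mp (hst hx)
  obtain ⟨z, hz, hyz⟩ := Set.mem_iUnion₂.mp (htc hy)
  refine Set.mem_iUnion₂.mpr ⟨z, hz, ?_⟩
  calc dist x z ≤ dist x y + dist y z := dist_triangle x y z
    _ < ε / 2 + ε / 2 := add_lt_add hxy hyz
    _ = ε := add_halves ε

theorem TopologicalSpace.NonemptyCompacts.totallyBounded_iUnion_of_cauchySeq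
    {α : Type*} [MetricSpace α] {u : ℕ → NonemptyCompacts α} (hu : CauchySeq u) :
    TotallyBounded (⋃ n, (u n : Set α)) := by
  refine totallyBounded_of_forall_subset_thickening fun ε hε => ?_
  obtain ⟨N, hN⟩ := cauchySeq_iff'.mp hu ε hε
  have hcompact : IsCompact (⋃ n ∈ Set.Iic N, (u n : Set α)) :=
    (Set.finite_Iic N).isCompact_biUnion fun n _ => (u n).isCompact
  refine ⟨_, hcompact.totallyBounded, Set.iUnion_subset fun n x hx => ?_⟩
  rcases le_total n N with hnN | hNn
  · exact self_subset_thickening hε _ (Set.mem_biUnion hnN hx)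
  · have hfin : hausdorffEDist (u n : Set α) (u N) ≠ ⊤ :=
      hausdorffEDist_ne_top_of_nonempty_of_bounded (u n).nonempty (u N).nonempty
        (u n).isCompact.isBounded (u N).isCompact.isBounded
    obtain ⟨y, hy, hxy⟩ := exists_dist_lt_of_hausdorffDist_lt hx (hN n hNn) hfin
    exact mem_thickening_iff.mpr ⟨y, Set.mem_biUnion Set.self_mem_Iic hy, hxy⟩

/-- If `(T n)` is an increasing sequence of nonempty compact subsets of a complete metric
space with `∑_i d_H(T (2^(i+1)), T (2^i)) < ∞`, then the closure of `⋃ n, T n` is compact. -/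
theorem stmt_15 {E : Type*} [MetricSpace E] [CompleteSpace E]
    (T : ℕ → Set E) (hne : ∀ n, (T n).Nonempty) (hcpt : ∀ n, IsCompact (T n))
    (hmono : Monotone T)
    (hsum : Summable (fun i => Metric.hausdorffDist (T (2 ^ (i + 1))) (T (2 ^ i)))) :
    IsCompact (closure (⋃ n, T n)) := by
  let u : ℕ → NonemptyCompacts E := fun i => ⟨⟨T (2 ^ i), hcpt _⟩, hne _⟩
  have hu : CauchySeq u := cauchySeq_of_summable_dist <|
    hsum.congr fun _ => hausdorffDist_comm
  have hunion : ⋃ i, T (2 ^ i) = ⋃ n, T n :=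
    hmono.iUnion_comp_tendsto_atTop (tendsto_pow_atTop_atTop_of_one_lt one_lt_two)
  have htb : TotallyBounded (⋃ n, T n) :=
    hunion ▸ NonemptyCompacts.totallyBounded_iUnion_of_cauchySeq hu
  exact htb.closure.isCompact_of_isClosed isClosed_closure
end

section
/- Let (X, d) be a metric space, μ a finite nonzero Borel measure on X, and γ > 0 such that ∫∫ d(x,y)^{-γ} dμ(x) dμ(y) < ∞. Then the Hausdorff dimension of X is at least γ (Frostman energy criterion). -/
/-!
Suppose `dimH X < γ`, so that `μH[γ] X = 0`. In particular `μH[γ] X` is finite, which makes `X`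
separable, so that Tonelli's theorem applies to the energy integral. Finite energy then makes the
potential `U x = ∫ d(x,y)^(-γ) dμ(y)` bounded by some `n` on a set `A` of positive measure. For
`x ∈ A`, comparing `d(x,y)^(-γ)` with `r^(-γ)` on the ball `B(x,r)` gives `μ(B(x,r)) ≤ n r^γ`, so
by the mass distribution principle `μ|_A ≪ μH[γ]`, contradicting `μH[γ] X = 0`.
-/

open MeasureTheory Metric Set
open scoped ENNReal

namespace MeasureTheory

variable {X : Type*}

noncomputable def rieszPotential [EDist X] [MeasurableSpace X] (μ : Measure X) (γ : ℝ) (x : X) :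
    ℝ≥0∞ :=
  ∫⁻ y, edist x y ^ (-γ) ∂μ

section PseudoEMetric

variable [PseudoEMetricSpace X] [MeasurableSpace X] [OpensMeasurableSpace X]

lemma measure_closedEBall_le_rieszPotential_mul_rpow (μ : Measure X) {γ : ℝ} (hγ : 0 ≤ γ)
    {x : X} (hx : rieszPotential μ γ x ≠ ⊤) {r : ℝ≥0∞} (hr : r ≠ ⊤) :
    μ (closedEBall x r) ≤ rieszPotential μ γ x * r ^ γ := by
  have hr' : r ^ (-γ) ≠ 0 := by simp [ENNReal.rpow_eq_zero_iff, hr, hγ.not_gt]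
  have hmass : μ (closedEBall x r) * r ^ (-γ) ≤ rieszPotential μ γ x :=
    calc μ (closedEBall x r) * r ^ (-γ)
        = ∫⁻ _ in closedEBall x r, r ^ (-γ) ∂μ := by rw [setLIntegral_const, mul_comm]
      _ ≤ ∫⁻ y in closedEBall x r, edist x y ^ (-γ) ∂μ := by
          refine setLIntegral_mono (by fun_prop) fun y hy => ?_
          rw [ENNReal.rpow_neg, ENNReal.rpow_neg]
          exact ENNReal.inv_le_inv.2 (ENNReal.rpow_le_rpow (mem_closedEBall'.1 hy) hγ)
      _ ≤ rieszPotential μ γ x := setLIntegral_le_lintegral _ _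
  rwa [← ENNReal.le_div_iff_mul_le (.inl hr') (.inr hx), div_eq_mul_inv, ENNReal.rpow_neg,
    inv_inv] at hmass

lemma measurable_edist_rpow [SecondCountableTopology X] (γ : ℝ) :
    Measurable fun p : X × X => edist p.1 p.2 ^ γ :=
  ENNReal.continuous_rpow_const.measurable.comp measurable_edist

lemma measurable_rieszPotential [SecondCountableTopology X] (μ : Measure X) [SFinite μ] (γ : ℝ) :
    Measurable (rieszPotential μ γ) :=
  (measurable_edist_rpow (-γ)).lintegral_prod_right'

lemma ae_rieszPotential_lt_top [SecondCountableTopology X] (μ : Measure X) [SFinite μ] {γ : ℝ}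
    (henergy : ∫⁻ p : X × X, edist p.1 p.2 ^ (-γ) ∂(μ.prod μ) ≠ ⊤) :
    ∀ᵐ x ∂μ, rieszPotential μ γ x < ⊤ := by
  refine ae_lt_top (measurable_rieszPotential μ γ) ?_
  rwa [lintegral_prod _ (measurable_edist_rpow (-γ)).aemeasurable] at henergy

end PseudoEMetric

lemma exists_nat_measure_setOf_le_ne_zero {α : Type*} [MeasurableSpace α] {μ : Measure α}
    (hμ : μ ≠ 0) {f : α → ℝ≥0∞} (hf : ∀ᵐ x ∂μ, f x < ⊤) :
    ∃ n : ℕ, μ {x | f x ≤ n} ≠ 0 := by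
  by_contra! h
  have hbelow : ∀ᵐ x ∂μ, ∀ n : ℕ, ¬ f x ≤ n :=
    ae_all_iff.2 fun n => measure_eq_zero_iff_ae_notMem.1 (h n)
  refine hμ (ae_eq_bot.1 (Filter.eventually_false_iff_eq_bot.1 ?_))
  filter_upwards [hf, hbelow] with x hx hbelow
  obtain ⟨n, hn⟩ := ENNReal.exists_nat_gt hx.ne
  exact hbelow n hn.le

section EMetric

variable [EMetricSpace X] [MeasurableSpace X] [BorelSpace X]

lemma restrict_absolutelyContinuous_hausdorffMeasure {μ : Measure X} {A : Set X}
    (hA : MeasurableSet A) {M : ℝ≥0∞} (hM : M ≠ ⊤) {d : ℝ}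
    (hball : ∀ x ∈ A, ∀ r ≠ ⊤, μ (closedEBall x r) ≤ M * r ^ d) :
    μ.restrict A ≪ μH[d] := by
  have hle : M⁻¹ • μ.restrict A ≤ μH[d] := by
    refine Measure.le_hausdorffMeasure d _ 1 one_pos fun s hs => ?_
    rw [Measure.smul_apply, smul_eq_mul, Measure.restrict_apply' hA]
    rcases (s ∩ A).eq_empty_or_nonempty with hsA | ⟨x, hxs, hxA⟩
    · simp [hsA]
    calc M⁻¹ * μ (s ∩ A)
        ≤ M⁻¹ * μ (closedEBall x (ediam s)) := by
          gcongr
          exact fun y hy => edist_le_ediam_of_mem hy.1 hxs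
      _ ≤ M⁻¹ * (M * ediam s ^ d) := by
          gcongr
          exact hball x hxA _ (ne_top_of_le_ne_top ENNReal.one_ne_top hs)
      _ ≤ ediam s ^ d := by
          rw [← mul_assoc]
          exact mul_le_of_le_one_left' (ENNReal.inv_mul_le_one M)
  exact (Measure.absolutelyContinuous_smul (ENNReal.inv_ne_zero.2 hM)).trans
    (Measure.absolutelyContinuous_of_le hle)

lemma hausdorffMeasure_univ_ne_zero_of_energy_ne_top [SecondCountableTopology X]
    (μ : Measure X) [SFinite μ] (hμ : μ ≠ 0) {γ : ℝ} (hγ : 0 ≤ γ)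
    (henergy : ∫⁻ p : X × X, edist p.1 p.2 ^ (-γ) ∂(μ.prod μ) ≠ ⊤) :
    μH[γ] (univ : Set X) ≠ 0 := by
  obtain ⟨n, hn⟩ := exists_nat_measure_setOf_le_ne_zero hμ (ae_rieszPotential_lt_top μ henergy)
  set A := {x | rieszPotential μ γ x ≤ n}
  have hA : MeasurableSet A := measurable_rieszPotential μ γ measurableSet_Iic
  have hball : ∀ x ∈ A, ∀ r ≠ ⊤, μ (closedEBall x r) ≤ n * r ^ γ := fun x hx r hr =>
    (measure_closedEBall_le_rieszPotential_mul_rpow μ hγ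
      (ne_top_of_le_ne_top (ENNReal.natCast_ne_top n) hx) hr).trans (by gcongr; exact hx)
  intro hzero
  apply hn
  simpa [Measure.restrict_apply_univ] using
    restrict_absolutelyContinuous_hausdorffMeasure hA (ENNReal.natCast_ne_top n) hball hzero

lemma exists_cover_ediam_le_of_hausdorffMeasure_ne_top {d : ℝ} {s : Set X} (hs : μH[d] s ≠ ⊤)
    {ε : ℝ≥0∞} (hε : 0 < ε) :
    ∃ t : ℕ → Set X, s ⊆ ⋃ n, t n ∧ ∀ n, ediam (t n) ≤ ε := by
  by_contra! h
  refine hs (eq_top_iff.2 ?_)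
  rw [Measure.hausdorffMeasure_apply]
  refine le_iSup₂_of_le ε hε (le_iInf₂ fun t hcov => le_iInf fun hdiam => ?_)
  obtain ⟨n, hn⟩ := h t hcov
  exact absurd (hdiam n) hn.not_ge

lemma secondCountableTopology_of_hausdorffMeasure_univ_ne_top {d : ℝ}
    (hX : μH[d] (univ : Set X) ≠ ⊤) : SecondCountableTopology X := by
  refine EMetric.secondCountable_of_almost_dense_set fun ε hε => ?_
  obtain ⟨t, hcov, hdiam⟩ := exists_cover_ediam_le_of_hausdorffMeasure_ne_top hX hε
  refine ⟨range fun n : {n // (t n).Nonempty} => n.2.some, countable_range _,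
    eq_univ_of_forall fun y => ?_⟩
  obtain ⟨n, hyn⟩ := mem_iUnion.1 (hcov (mem_univ y))
  have hn : (t n).Nonempty := ⟨y, hyn⟩
  exact mem_biUnion (mem_range_self ⟨n, hn⟩) <| mem_closedEBall.2 <|
    ((edist_le_ediam_of_mem hyn hn.some_mem).trans (hdiam n))

end EMetric

end MeasureTheory

open MeasureTheory

/-- Frostman's energy criterion: if `μ` is a finite nonzero Borel measure on a metric
space `X` and the `γ`-energy `∫∫ d(x,y)^(-γ) dμ dμ` is finite, then the Hausdorff
dimension of `X` is at least `γ`. -/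
theorem stmt_16 {X : Type*} [MetricSpace X] [MeasurableSpace X] [BorelSpace X]
    (μ : Measure X) [IsFiniteMeasure μ] (hμ : μ ≠ 0)
    (γ : ℝ) (hγ : 0 < γ)
    (henergy : ∫⁻ p : X × X, (edist p.1 p.2) ^ (-γ) ∂(μ.prod μ) < ⊤) :
    ENNReal.ofReal γ ≤ dimH (Set.univ : Set X) := by
  by_contra! hlt
  have hzero : μH[γ] (univ : Set X) = 0 := by
    simpa [Real.coe_toNNReal γ hγ.le] using hausdorffMeasure_of_dimH_lt (d := γ.toNNReal) hlt
  have : SecondCountableTopology X :=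
    secondCountableTopology_of_hausdorffMeasure_univ_ne_top (hzero ▸ ENNReal.zero_ne_top)
  exact hausdorffMeasure_univ_ne_zero_of_energy_ne_top μ hμ hγ.le henergy.ne hzero
end

section
/- Let (a_i) be positive reals with partial sums A_i, and suppose for every ε > 0 eventually a_i ≥ i^{-α-ε} among 'good' indices and a_i + a_{i+1} + ... + a_{2i} = i^{1-α+o(1)} for α > 1. Define G_n = {i ∈ [n,2n] : a_i ≥ i^{-α-ε}} for fixed ε > 0 and ℓ_n = ∑_{i∈G_n} a_i. Then #G_n = n^{1+o(1)} and ℓ_n = n^{1-α+o(1)}. -/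
/-!
The block sum `S n = ∑_{i ∈ [n, 2n]} a i` is `n^(1-α+o(1))`, while the bad indices (those with
`a i < i^(-α-ε)`) contribute at most `(n + 1) n^(-α-ε) = O(n^(1-α-ε))`, a power smaller by `n^ε`.
Hence `ℓ n = n^(1-α+o(1))` as well. Since every `a i` is at most `n^(-α+o(1))` on the block,
`ℓ n ≤ #G n · n^(-α+o(1))` forces `#G n ≥ n^(1-o(1))`, and trivially `#G n ≤ n + 1`.
-/

open Finset Filter Real

/-- `f n = n^(c + o(1))` as `n → ∞`. -/
def HasGrowthExponent (f : ℕ → ℝ) (c : ℝ) : Prop :=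
  ∀ δ > 0, ∀ᶠ n : ℕ in atTop, (n : ℝ) ^ (c - δ) ≤ f n ∧ f n ≤ (n : ℝ) ^ (c + δ)

lemma eventually_const_mul_rpow_le (C : ℝ) {p q : ℝ} (hpq : p < q) :
    ∀ᶠ n : ℕ in atTop, C * (n : ℝ) ^ p ≤ (n : ℝ) ^ q := by
  have hlarge : ∀ᶠ n : ℕ in atTop, C ≤ (n : ℝ) ^ (q - p) :=
    ((tendsto_rpow_atTop (sub_pos.mpr hpq)).comp tendsto_natCast_atTop_atTop).eventually_ge_atTop C
  filter_upwards [hlarge, eventually_gt_atTop 0] with n hC hn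
  have hn' : (0 : ℝ) < n := Nat.cast_pos.mpr hn
  calc C * (n : ℝ) ^ p ≤ (n : ℝ) ^ (q - p) * (n : ℝ) ^ p := by gcongr
    _ = (n : ℝ) ^ q := by rw [← rpow_add hn', sub_add_cancel]

namespace HasGrowthExponent

variable {f g : ℕ → ℝ} {c : ℝ}

lemma of_le_of_sub_le {c' C : ℝ} (hf : HasGrowthExponent f c) (hc' : c' < c)
    (hgf : ∀ᶠ n in atTop, g n ≤ f n) (hfg : ∀ᶠ n : ℕ in atTop, f n - g n ≤ C * (n : ℝ) ^ c') :
    HasGrowthExponent g c := by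
  intro δ hδ
  obtain ⟨η, hη, hηmin⟩ := exists_between (lt_min hδ (sub_pos.mpr hc'))
  obtain ⟨hηδ, hηc'⟩ := lt_min_iff.mp hηmin
  filter_upwards [hf η hη, hf δ hδ, hgf, hfg, eventually_const_mul_rpow_le 2 (p := c - δ)
    (by linarith : c - δ < c - η), eventually_const_mul_rpow_le (2 * C) (by linarith : c' < c - η)]
    with n ⟨hfη, _⟩ ⟨_, hfδ⟩ hgfn hfgn hδη hCη
  -- both `n^(c-δ)` and `C n^c'` are at most half of `n^(c-η) ≤ f n`
  constructor <;> linarith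

lemma le_of_le_mul_rpow {d e : ℝ} (hf : HasGrowthExponent f c) (hcde : c - d = e)
    (hfg : ∀ δ > 0, ∀ᶠ n : ℕ in atTop, f n ≤ g n * (n : ℝ) ^ (d + δ)) :
    ∀ δ > 0, ∀ᶠ n : ℕ in atTop, (n : ℝ) ^ (e - δ) ≤ g n := by
  intro δ hδ
  filter_upwards [hf (δ / 2) (by positivity), hfg (δ / 2) (by positivity),
    eventually_gt_atTop 0] with n ⟨hfn, _⟩ hfgn hn
  have hn' : (0 : ℝ) < n := Nat.cast_pos.mpr hn
  have hexp : e - δ = (c - δ / 2) - (d + δ / 2) := by rw [← hcde]; ring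
  rw [hexp, rpow_sub hn', div_le_iff₀ (rpow_pos_of_pos hn' _)]
  exact hfn.trans hfgn

end HasGrowthExponent

lemma card_Icc_two_mul_le {n : ℕ} (hn : 0 < n) : (#(Icc n (2 * n)) : ℝ) ≤ 2 * n := by
  rw [Nat.card_Icc]
  norm_cast
  omega

lemma sum_le_card_mul_rpow {a : ℕ → ℝ} {s : Finset ℕ} {n : ℕ} {p : ℝ} (hn : 0 < n) (hp : p ≤ 0)
    (hs : ∀ i ∈ s, n ≤ i ∧ a i ≤ (i : ℝ) ^ p) : ∑ i ∈ s, a i ≤ #s * (n : ℝ) ^ p := by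
  calc ∑ i ∈ s, a i ≤ ∑ _i ∈ s, (n : ℝ) ^ p := sum_le_sum fun i hi =>
        (hs i hi).2.trans (rpow_le_rpow_of_nonpos (Nat.cast_pos.mpr hn)
          (Nat.cast_le.mpr (hs i hi).1) hp)
    _ = #s * (n : ℝ) ^ p := by rw [sum_const, nsmul_eq_mul]

lemma sum_Icc_filter_lt_rpow_le (a : ℕ → ℝ) {n : ℕ} {p : ℝ} (hn : 0 < n) (hp : p ≤ 0) :
    ∑ i ∈ (Icc n (2 * n)).filter (fun i : ℕ => ¬ (i : ℝ) ^ p ≤ a i), a i ≤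
      2 * (n : ℝ) ^ (1 + p) := by
  have hn' : (0 : ℝ) < n := Nat.cast_pos.mpr hn
  calc ∑ i ∈ (Icc n (2 * n)).filter (fun i : ℕ => ¬ (i : ℝ) ^ p ≤ a i), a i
      ≤ #((Icc n (2 * n)).filter (fun i : ℕ => ¬ (i : ℝ) ^ p ≤ a i)) * (n : ℝ) ^ p := by
        refine sum_le_card_mul_rpow hn hp fun i hi => ?_
        rw [mem_filter, mem_Icc] at hi
        exact ⟨hi.1.1, (not_le.mp hi.2).le⟩
    _ ≤ (2 * n) * (n : ℝ) ^ p := by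
        gcongr
        exact (Nat.cast_le.mpr (card_filter_le _ _)).trans (card_Icc_two_mul_le hn)
    _ = 2 * (n : ℝ) ^ (1 + p) := by rw [add_comm, rpow_add_one hn'.ne']; ring

lemma card_le_rpow_of_subset_Icc (s : ℕ → Finset ℕ) (hs : ∀ n, s n ⊆ Icc n (2 * n))
    {δ : ℝ} (hδ : 0 < δ) : ∀ᶠ n : ℕ in atTop, (#(s n) : ℝ) ≤ (n : ℝ) ^ (1 + δ) := by
  filter_upwards [eventually_const_mul_rpow_le 2 (by linarith : (1 : ℝ) < 1 + δ),
    eventually_gt_atTop 0] with n hpow hn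
  rw [rpow_one] at hpow
  exact (Nat.cast_le.mpr (card_le_card (hs n))).trans ((card_Icc_two_mul_le hn).trans hpow)

section PowerDecay

variable {a : ℕ → ℝ} {α : ℝ}

lemma hasGrowthExponent_sum_Icc_filter_rpow_le (ha : ∀ i, 0 ≤ a i) (hα : 0 ≤ α) {ε : ℝ}
    (hε : 0 < ε) (hblock : HasGrowthExponent (fun n => ∑ j ∈ Icc n (2 * n), a j) (1 - α)) :
    HasGrowthExponent
      (fun n => ∑ i ∈ (Icc n (2 * n)).filter (fun i : ℕ => (i : ℝ) ^ (-α - ε) ≤ a i), a i)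
      (1 - α) := by
  refine hblock.of_le_of_sub_le (c' := 1 + (-α - ε)) (C := 2) (by linarith) ?_ ?_
  · exact .of_forall fun n =>
      sum_le_sum_of_subset_of_nonneg (filter_subset _ _) fun i _ _ => ha i
  · filter_upwards [eventually_gt_atTop 0] with n hn
    rw [← sum_filter_add_sum_filter_not _ (fun i : ℕ => (i : ℝ) ^ (-α - ε) ≤ a i),
      add_sub_cancel_left]
    exact sum_Icc_filter_lt_rpow_le a hn (by linarith)

lemma eventually_sum_le_card_mul_rpow (hα : 0 < α)
    (hupper : ∀ δ > 0, ∃ N : ℕ, ∀ i ≥ N, a i ≤ (i : ℝ) ^ (-α + δ))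
    (s : ℕ → Finset ℕ) (hs : ∀ n, ∀ i ∈ s n, n ≤ i) {δ : ℝ} (hδ : 0 < δ) :
    ∀ᶠ n : ℕ in atTop, ∑ i ∈ s n, a i ≤ #(s n) * (n : ℝ) ^ (-α + δ) := by
  obtain ⟨N, hN⟩ := hupper (min δ α) (lt_min hδ hα)
  filter_upwards [eventually_ge_atTop (max N 1)] with n hn
  have hn1 : (1 : ℝ) ≤ n := by exact_mod_cast (le_max_right N 1).trans hn
  calc ∑ i ∈ s n, a i ≤ #(s n) * (n : ℝ) ^ (-α + min δ α) :=
        sum_le_card_mul_rpow (by omega) (by linarith [min_le_right δ α]) fun i hi =>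
          ⟨hs n i hi, hN i (by have := hs n i hi; omega)⟩
    _ ≤ #(s n) * (n : ℝ) ^ (-α + δ) := by
        gcongr
        exact min_le_left δ α

end PowerDecay

/-- Under `(D_α)` with `α > 1`, the set `G n` of good indices `i ∈ [n, 2n]`
(those with `a i ≥ i^(-α-ε)`) has cardinality `n^(1+o(1))` and its total length
`ℓ n = ∑_{i ∈ G n} a i` satisfies `ℓ n = n^(1-α+o(1))`. -/
theorem stmt_18 (α : ℝ) (hα : 1 < α) (ε : ℝ) (hε : 0 < ε)
    (a : ℕ → ℝ) (ha : ∀ i, 0 < a i)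
    (hupper : ∀ δ > (0 : ℝ), ∃ N : ℕ, ∀ i ≥ N, a i ≤ (i : ℝ) ^ (-α + δ))
    (hblock : ∀ δ > (0 : ℝ), ∃ N : ℕ, ∀ i ≥ N,
      (i : ℝ) ^ (1 - α - δ) ≤ (∑ j ∈ Finset.Icc i (2 * i), a j) ∧
      (∑ j ∈ Finset.Icc i (2 * i), a j) ≤ (i : ℝ) ^ (1 - α + δ))
    (G : ℕ → Finset ℕ)
    (hG : ∀ n, G n = (Finset.Icc n (2 * n)).filter (fun i : ℕ => (i : ℝ) ^ (-α - ε) ≤ a i))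
    (ℓ : ℕ → ℝ) (hℓ : ∀ n, ℓ n = ∑ i ∈ G n, a i) :
    ∀ δ > (0 : ℝ), ∃ N : ℕ, ∀ n ≥ N,
      (n : ℝ) ^ (1 - δ) ≤ (G n).card ∧ ((G n).card : ℝ) ≤ (n : ℝ) ^ (1 + δ) ∧
      (n : ℝ) ^ (1 - α - δ) ≤ ℓ n ∧ ℓ n ≤ (n : ℝ) ^ (1 - α + δ) := by
  have hGsub (n : ℕ) : G n ⊆ Icc n (2 * n) := hG n ▸ filter_subset _ _
  have hℓ' : HasGrowthExponent ℓ (1 - α) := by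
    convert hasGrowthExponent_sum_Icc_filter_rpow_le (fun i => (ha i).le) (by linarith) hε
      fun δ hδ => eventually_atTop.mpr (hblock δ hδ) using 2 with n
    rw [hℓ, hG]
  have hcard_lower := hℓ'.le_of_le_mul_rpow (g := fun n => ((G n).card : ℝ)) (d := -α) (e := 1)
    (by ring) fun δ hδ => by
      simpa only [hℓ] using eventually_sum_le_card_mul_rpow (by linarith) hupper G
        (fun n i hi => (mem_Icc.mp (hGsub n hi)).1) hδ
  intro δ hδ
  obtain ⟨N, hN⟩ := eventually_atTop.mp
    (((hcard_lower δ hδ).and (card_le_rpow_of_subset_Icc G hGsub hδ)).and (hℓ' δ hδ))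
  exact ⟨N, fun n hn => ⟨(hN n hn).1.1, (hN n hn).1.2, (hN n hn).2⟩⟩
end
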